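/- arXiv:2502.00602 — 3 statements merged into one kernel-verified Lean document; each statement's English description precedes it below -/
import Mathlib

section
/- Let a, b, c be vectors in a real inner product space with b ≠ 0, c ≠ 0, and a + b ≠ 0. Set λ = ‖c‖/(‖b‖ + ‖c‖) and δ = c/‖c‖ − b/‖b‖, and assume ‖b‖·‖δ‖ < ‖a + b‖. Then λ·a + (1 − λ)·c ≠ 0 and ⟨λ·a + (1 − λ)·c, a + b⟩ / ‖λ·a + (1 − λ)·c‖ ≥ ‖a + b‖·(‖a + b‖ − ‖b‖·‖δ‖)/(‖a + b‖ + ‖b‖·‖δ‖). -/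
open RealInnerProductSpace

private lemma key_lemma {E : Type*} [NormedAddCommGroup E] [InnerProductSpace ℝ E]
    (u d : E) (h : ‖d‖ < ‖u‖) :
    u + d ≠ 0 ∧ ⟪u + d, u⟫ / ‖u + d‖ ≥ ‖u‖ * (‖u‖ - ‖d‖) / (‖u‖ + ‖d‖) := by
  have hne : u + d ≠ 0 := by
    intro h0
    have : d = -u := by
      have := eq_neg_of_add_eq_zero_right h0
      rw [this]
    rw [this, norm_neg] at h
    exact lt_irrefl _ h
  refine ⟨hne, ?_⟩
  have hpos : 0 < ‖u + d‖ := norm_pos_iff.mpr hne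
  have hdnn : (0:ℝ) ≤ ‖d‖ := norm_nonneg d
  have hinner : ⟪u + d, u⟫ = ‖u‖ ^ 2 + ⟪d, u⟫ := by
    rw [inner_add_left, real_inner_self_eq_norm_sq]
  have habs : |⟪d, u⟫| ≤ ‖d‖ * ‖u‖ := abs_real_inner_le_norm d u
  have hlow : -(‖d‖ * ‖u‖) ≤ ⟪d, u⟫ := neg_le_of_abs_le habs
  have hX : ‖u‖ * (‖u‖ - ‖d‖) ≤ ⟪u + d, u⟫ := by
    rw [hinner]; nlinarith
  have hXnn : (0:ℝ) ≤ ⟪u + d, u⟫ := by nlinarith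
  have hD : ‖u + d‖ ≤ ‖u‖ + ‖d‖ := norm_add_le u d
  exact div_le_div₀ hXnn hX hpos hD

/-- With `λ = ‖c‖/(‖b‖+‖c‖)` and `δ = c/‖c‖ − b/‖b‖`, if
`‖b‖·‖δ‖ < ‖a+b‖`, then `λ·a + (1−λ)·c ≠ 0` and
`⟨λa + (1−λ)c, a+b⟩/‖λa + (1−λ)c‖ ≥ ‖a+b‖·(‖a+b‖ − ‖b‖‖δ‖)/(‖a+b‖ + ‖b‖‖δ‖)`. -/
theorem overtone_direction_lower_bound
    {E : Type*} [NormedAddCommGroup E] [InnerProductSpace ℝ E]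
    (a b c : E) (hb : b ≠ 0) (hc : c ≠ 0) (hab : a + b ≠ 0)
    (hsmall : ‖b‖ * ‖(‖c‖⁻¹ • c - ‖b‖⁻¹ • b : E)‖ < ‖a + b‖) :
    (‖c‖ / (‖b‖ + ‖c‖)) • a + (1 - ‖c‖ / (‖b‖ + ‖c‖)) • c ≠ 0 ∧
    ⟪(‖c‖ / (‖b‖ + ‖c‖)) • a + (1 - ‖c‖ / (‖b‖ + ‖c‖)) • c, a + b⟫
        / ‖(‖c‖ / (‖b‖ + ‖c‖)) • a + (1 - ‖c‖ / (‖b‖ + ‖c‖)) • c‖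
      ≥ ‖a + b‖ * (‖a + b‖ - ‖b‖ * ‖(‖c‖⁻¹ • c - ‖b‖⁻¹ • b : E)‖)
          / (‖a + b‖ + ‖b‖ * ‖(‖c‖⁻¹ • c - ‖b‖⁻¹ • b : E)‖) := by
  set δ : E := ‖c‖⁻¹ • c - ‖b‖⁻¹ • b with hδ
  set l : ℝ := ‖c‖ / (‖b‖ + ‖c‖) with hl
  have hbpos : 0 < ‖b‖ := norm_pos_iff.mpr hb
  have hcpos : 0 < ‖c‖ := norm_pos_iff.mpr hc
  have hbc : 0 < ‖b‖ + ‖c‖ := by linarith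
  have hlpos : 0 < l := div_pos hcpos hbc
  have hd : ‖(‖b‖ • δ : E)‖ < ‖a + b‖ := by
    rw [norm_smul, Real.norm_eq_abs, abs_of_pos hbpos]; exact hsmall
  obtain ⟨hne, hineq⟩ := key_lemma (a + b) (‖b‖ • δ) hd
  have hv : l • a + (1 - l) • c = l • ((a + b) + ‖b‖ • δ) := by
    rw [hδ, hl]
    have h1 : (1 : ℝ) - ‖c‖ / (‖b‖ + ‖c‖) = ‖b‖ / (‖b‖ + ‖c‖) := by
      field_simp; ring
    rw [h1]
    simp only [smul_sub, smul_add, smul_smul]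
    rw [mul_inv_cancel₀ (ne_of_gt hbpos)]
    have h2 : ‖c‖ / (‖b‖ + ‖c‖) * (‖b‖ * ‖c‖⁻¹) = ‖b‖ / (‖b‖ + ‖c‖) := by
      field_simp
    rw [h2, mul_one]
    abel
  have hvne : l • a + (1 - l) • c ≠ 0 := by
    rw [hv]
    exact smul_ne_zero (ne_of_gt hlpos) hne
  refine ⟨hvne, ?_⟩
  rw [hv, real_inner_smul_left, norm_smul, Real.norm_eq_abs, abs_of_pos hlpos,
    mul_div_mul_left _ _ (ne_of_gt hlpos)]
  rw [hδ] at *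
  simpa [norm_smul, Real.norm_eq_abs, abs_of_pos hbpos] using hineq
end

section
/- Let d ≥ 1 and let μ be a probability measure on the Euclidean space ℝ^d (EuclideanSpace ℝ (Fin d)) that is invariant under every linear isometry equivalence of ℝ^d. Let a, c ∈ ℝ^d satisfy ‖c‖ < ‖a‖, and assume 0 < ∫ |⟨a, w⟩| dμ(w) < ∞. Then for every λ ∈ [0, 1), ∫ |λ·⟨a, w⟩ + (1 − λ)·⟨c, w⟩| dμ(w) < ∫ |⟨a, w⟩| dμ(w). In particular ∫ |⟨c, w⟩| dμ(w) < ∫ |⟨a, w⟩| dμ(w). -/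
open MeasureTheory RealInnerProductSpace

section Aux

variable {d : ℕ}

private theorem overtone_key
    (μ : Measure (EuclideanSpace ℝ (Fin d))) [IsProbabilityMeasure μ]
    (hinv : ∀ f : EuclideanSpace ℝ (Fin d) ≃ₗᵢ[ℝ] EuclideanSpace ℝ (Fin d),
      Measure.map f μ = μ)
    (a : EuclideanSpace ℝ (Fin d)) (ha : a ≠ 0)
    (v : EuclideanSpace ℝ (Fin d)) :
    ∫ w, |⟪v, w⟫| ∂μ = (‖v‖ / ‖a‖) * ∫ w, |⟪a, w⟫| ∂μ := by
  have hna : (0:ℝ) < ‖a‖ := norm_pos_iff.mpr ha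
  by_cases hv : v = 0
  · simp [hv]
  have hnv : (0:ℝ) < ‖v‖ := norm_pos_iff.mpr hv
  set b : EuclideanSpace ℝ (Fin d) := (‖a‖ / ‖v‖) • v with hb
  have hnb : ‖b‖ = ‖a‖ := by
    rw [hb, norm_smul, Real.norm_eq_abs, abs_of_pos (by positivity)]
    field_simp
  set f : EuclideanSpace ℝ (Fin d) ≃ₗᵢ[ℝ] EuclideanSpace ℝ (Fin d) :=
    Submodule.reflection (ℝ ∙ (a - b))ᗮ with hf
  have hfa : f a = b := Submodule.reflection_sub hnb.symm
  have hfb : f b = a := by rw [← hfa]; exact Submodule.reflection_reflection _ _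
  have hfv : f v = (‖v‖ / ‖a‖) • a := by
    have : v = (‖v‖ / ‖a‖) • b := by
      rw [hb, smul_smul]; rw [show ‖v‖ / ‖a‖ * (‖a‖ / ‖v‖) = 1 by field_simp, one_smul]
    conv_lhs => rw [this, _root_.map_smul, hfb]
  have hmeas : AEStronglyMeasurable (fun w => |⟪v, w⟫|) (Measure.map f μ) :=
    (Continuous.abs (continuous_const.inner continuous_id)).aestronglyMeasurable
  calc ∫ w, |⟪v, w⟫| ∂μ = ∫ w, |⟪v, w⟫| ∂(Measure.map f μ) := by rw [hinv f]
    _ = ∫ w, |⟪v, f w⟫| ∂μ := integral_map f.continuous.measurable.aemeasurable hmeas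
    _ = ∫ w, (‖v‖ / ‖a‖) * |⟪a, w⟫| ∂μ := by
        congr 1; funext w
        have : ⟪v, f w⟫ = ⟪f v, f (f w)⟫ := (f.inner_map_map _ _).symm
        rw [this]
        have hff : f (f w) = w := Submodule.reflection_reflection _ _
        rw [hff, hfv, real_inner_smul_left, abs_mul, abs_of_pos (by positivity)]
    _ = (‖v‖ / ‖a‖) * ∫ w, |⟪a, w⟫| ∂μ := integral_const_mul _ _

end Aux

/-- If probability measure `μ` on `ℝ^d` (`d ≥ 1`) is invariant under
every linear isometry equivalence, `‖c‖ < ‖a‖`, and `0 < ∫ |⟨a,w⟩| dμ < ∞`, then for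
every `λ ∈ [0,1)`, `∫ |λ⟨a,w⟩ + (1−λ)⟨c,w⟩| dμ < ∫ |⟨a,w⟩| dμ`; in particular
`∫ |⟨c,w⟩| dμ < ∫ |⟨a,w⟩| dμ`. -/
theorem overtone_smaller_perturbation_unrelated
    (d : ℕ) (hd : 1 ≤ d)
    (μ : Measure (EuclideanSpace ℝ (Fin d))) [IsProbabilityMeasure μ]
    (hinv : ∀ f : EuclideanSpace ℝ (Fin d) ≃ₗᵢ[ℝ] EuclideanSpace ℝ (Fin d),
      Measure.map f μ = μ)
    (a c : EuclideanSpace ℝ (Fin d)) (hnorm : ‖c‖ < ‖a‖)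
    (hpos : 0 < ∫ w, |⟪a, w⟫| ∂μ)
    (hint : Integrable (fun w => |⟪a, w⟫|) μ) :
    (∀ lam : ℝ, lam ∈ Set.Ico (0 : ℝ) 1 →
      (∫ w, |lam * ⟪a, w⟫ + (1 - lam) * ⟪c, w⟫| ∂μ) < ∫ w, |⟪a, w⟫| ∂μ) ∧
    (∫ w, |⟪c, w⟫| ∂μ) < ∫ w, |⟪a, w⟫| ∂μ := by
  have hna : (0:ℝ) < ‖a‖ := lt_of_le_of_lt (norm_nonneg c) hnorm
  have ha : a ≠ 0 := norm_pos_iff.mp hna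
  set K := ∫ w, |⟪a, w⟫| ∂μ with hK
  have key := overtone_key μ hinv a ha
  have hlt : ∀ v : EuclideanSpace ℝ (Fin d), ‖v‖ < ‖a‖ →
      (∫ w, |⟪v, w⟫| ∂μ) < K := by
    intro v hv
    rw [key v]
    have : ‖v‖ / ‖a‖ < 1 := (div_lt_one hna).mpr hv
    calc ‖v‖ / ‖a‖ * K < 1 * K := by
          exact mul_lt_mul_of_pos_right this hpos
      _ = K := one_mul K
  constructor
  · intro lam hlam
    obtain ⟨h0, h1⟩ := hlam
    have heq : (∫ w, |lam * ⟪a, w⟫ + (1 - lam) * ⟪c, w⟫| ∂μ)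
        = ∫ w, |⟪lam • a + (1 - lam) • c, w⟫| ∂μ := by
      congr 1; funext w
      rw [inner_add_left, real_inner_smul_left, real_inner_smul_left]
    rw [heq]
    apply hlt
    calc ‖lam • a + (1 - lam) • c‖ ≤ ‖lam • a‖ + ‖(1 - lam) • c‖ := norm_add_le _ _
      _ = lam * ‖a‖ + (1 - lam) * ‖c‖ := by
          rw [norm_smul, norm_smul, Real.norm_eq_abs, Real.norm_eq_abs,
            abs_of_nonneg h0, abs_of_nonneg (by linarith)]
      _ < lam * ‖a‖ + (1 - lam) * ‖a‖ := by
          have : (0:ℝ) < 1 - lam := by linarith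
          nlinarith
      _ = ‖a‖ := by ring
  · exact hlt c hnorm
end

section
/- Let 𝒱 be a finite type, let p, r : 𝒱 → ℝ satisfy p(y) > 0 and r(y) > 0 for all y with Σ_{y∈𝒱} r(y) = 1, let y₀ ∈ 𝒱, and let λ ∈ ℝ. Define π_tar(y) = λ·δ_{y₀}(y) + (1 − λ)·r(y). Then the negative cross-entropy of π_tar against p admits the direct-preference-optimization decomposition: −CE[π_tar ‖ p] = λ·Σ_{y∈𝒱} r(y)·(log p(y₀) − log p(y)) − D_KL[r ‖ p] − H(r), where H(r) = −Σ_{y∈𝒱} r(y)·log r(y). Equivalently, −Σ_{y} (λ·δ_{y₀}(y) + (1−λ)·r(y))·log p(y) = λ·Σ_{y} r(y)·(log p(y₀) − log p(y)) − Σ_{y} r(y)·log(r(y)/p(y)) + Σ_{y} r(y)·log r(y). -/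
open Finset

/-- For positive `p`, a positive probability distribution `r`
(`Σ r = 1`), and the OVERTONE target `π_tar = λ·δ_{y₀} + (1−λ)·r`, the negative
cross-entropy decomposes as a token-level DPO objective plus a KL penalty:
`−CE[π_tar ‖ p] = λ·Σ_y r(y)·(log p(y₀) − log p(y)) − D_KL[r ‖ p] − H(r)`,
where `CE[π_tar ‖ p] = −Σ_y π_tar(y)·log p(y)`, `D_KL[r‖p] = Σ_y r(y)·log(r(y)/p(y))`,
and `H(r) = −Σ_y r(y)·log r(y)`. -/
theorem overtone_dpo_decomposition
    {𝒱 : Type*} [Fintype 𝒱] [DecidableEq 𝒱]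
    (p r : 𝒱 → ℝ) (hp : ∀ y, 0 < p y) (hr : ∀ y, 0 < r y)
    (hrsum : ∑ y : 𝒱, r y = 1) (y₀ : 𝒱) (lam : ℝ) :
    -(-(∑ y : 𝒱, (lam * (if y = y₀ then (1 : ℝ) else 0) + (1 - lam) * r y)
          * Real.log (p y)))
      = lam * (∑ y : 𝒱, r y * (Real.log (p y₀) - Real.log (p y)))
        - (∑ y : 𝒱, r y * Real.log (r y / p y))
        - (-(∑ y : 𝒱, r y * Real.log (r y))) := by
  have hlog : ∀ y, Real.log (r y / p y) = Real.log (r y) - Real.log (p y) := fun y =>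
    Real.log_div (hr y).ne' (hp y).ne'
  simp only [hlog, add_mul, mul_sub, sub_mul, ite_mul, one_mul, zero_mul, mul_ite, mul_one,
    mul_zero, Finset.sum_add_distrib, Finset.sum_sub_distrib, Finset.sum_ite_eq',
    Finset.mem_univ, if_true, ← Finset.mul_sum, ← Finset.sum_mul, hrsum]
  simp only [mul_assoc, ← Finset.mul_sum]
  ring
end
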